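/- arXiv:2102.12039 — 4 statements merged into one kernel-verified Lean document; each statement's English description precedes it below -/
import Mathlib

section
/- Let (Ω, P) be a finite probability space, T = {0, Δ, ..., TΔ} with all functions extended periodically with period (T+1)Δ, and let Z : Ω × T → ℝ^K be a vector-valued stochastic process that is weakly stationary with mean zero. Let U : Ω → T be uniformly distributed and independent of Z. Then the shifted process (ω,t) ↦ Z(ω; t − U(ω)) is also weakly stationary with mean zero, and moreover E[Z_k(t−U) Z_l(t+s−U)] = E[Z_k(0) Z_l(s)] for all k, l ∈ {1,...,K} and all t, s ∈ T. -/
open scoped BigOperators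

/-!
Splitting each expectation along the value `u` of `U` and using independence, a moment of the
shifted process is the average over `u` of the same moment of `Z` at times shifted by `-u`.
Mean zero kills every term; stationarity makes every term equal to `E[Z_k(0) Z_l(s)]`.
-/

open Finset

theorem sum_mul_eq_sum_sum_ite {Ω A R : Type*} [Fintype Ω] [Fintype A] [DecidableEq A]
    [NonUnitalNonAssocSemiring R] (p : Ω → R) (U : Ω → A) (H : Ω → A → R) :
    ∑ ω, p ω * H ω (U ω) = ∑ u, ∑ ω, (if U ω = u then p ω else 0) * H ω u := by
  rw [sum_comm]
  simp [ite_mul]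

/-- `hind` says that `U` is independent of `X` and every value of `U` has probability `c`. -/
theorem sum_mul_comp_of_indep {Ω A E R : Type*} [Fintype Ω] [Fintype A] [DecidableEq A]
    [NonUnitalNonAssocSemiring R] (p : Ω → R) (X : Ω → E) (U : Ω → A) (c : R)
    (hind : ∀ (u : A) (G : E → R),
      ∑ ω, (if U ω = u then p ω else 0) * G (X ω) = c * ∑ ω, p ω * G (X ω))
    (H : E → A → R) :
    ∑ ω, p ω * H (X ω) (U ω) = c * ∑ u, ∑ ω, p ω * H (X ω) u := by
  rw [sum_mul_eq_sum_sum_ite, mul_sum]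
  exact sum_congr rfl fun u _ => hind u (H · u)

theorem shifted_process_WSMZ_general (T K : ℕ) (Ω : Type*) [Fintype Ω] (p : Ω → ℝ)
    (Z : Ω → ZMod (T + 1) → Fin K → ℝ)
    (hmean : ∀ (t : ZMod (T + 1)) (k : Fin K), ∑ ω, p ω * Z ω t k = 0)
    (hstat : ∀ (k l : Fin K) (t t' s : ZMod (T + 1)),
      ∑ ω, p ω * (Z ω t k * Z ω (t + s) l) = ∑ ω, p ω * (Z ω t' k * Z ω (t' + s) l))
    (U : Ω → ZMod (T + 1))
    (hind : ∀ (u : ZMod (T + 1)) (G : (ZMod (T + 1) → Fin K → ℝ) → ℝ),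
      ∑ ω, (if U ω = u then p ω else 0) * G (Z ω)
        = (1 / (T + 1)) * ∑ ω, p ω * G (Z ω)) :
    (∀ (t : ZMod (T + 1)) (k : Fin K), ∑ ω, p ω * Z ω (t - U ω) k = 0) ∧
    (∀ (k l : Fin K) (t s : ZMod (T + 1)),
      ∑ ω, p ω * (Z ω (t - U ω) k * Z ω (t + s - U ω) l)
        = ∑ ω, p ω * (Z ω 0 k * Z ω s l)) := by
  constructor
  · intro t k
    rw [sum_mul_comp_of_indep p Z U _ hind (fun f u => f (t - u) k)]
    simp [hmean]
  · intro k l t s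
    have hshift : ∀ u : ZMod (T + 1),
        ∑ ω, p ω * (Z ω (t - u) k * Z ω (t + s - u) l) = ∑ ω, p ω * (Z ω 0 k * Z ω s l) := by
      intro u
      simpa [add_sub_right_comm] using hstat k l (t - u) 0 s
    rw [sum_mul_comp_of_indep p Z U _ hind (fun f u => f (t - u) k * f (t + s - u) l)]
    simp only [hshift, sum_const, card_univ, ZMod.card, nsmul_eq_mul]
    push_cast
    field_simp

/-- If `Z` is a weakly stationary mean-zero vector process on the cyclic
time set `ZMod (T+1)` (periodic extension) on a finite probability space, and `U` is
uniformly distributed and independent of `Z`, then the shifted process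
`(ω,t) ↦ Z(ω; t - U(ω))` is also weakly stationary with mean zero, and
`E[Z_k(t-U) Z_l(t+s-U)] = E[Z_k(0) Z_l(s)]`. -/
theorem shifted_process_WSMZ (T K : ℕ) (Ω : Type*) [Fintype Ω] (p : Ω → ℝ)
    (hp0 : ∀ ω, 0 ≤ p ω) (hp1 : ∑ ω, p ω = 1)
    (Z : Ω → ZMod (T + 1) → Fin K → ℝ)
    (hmean : ∀ (t : ZMod (T + 1)) (k : Fin K), ∑ ω, p ω * Z ω t k = 0)
    (hstat : ∀ (k l : Fin K) (t t' s : ZMod (T + 1)),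
      ∑ ω, p ω * (Z ω t k * Z ω (t + s) l) = ∑ ω, p ω * (Z ω t' k * Z ω (t' + s) l))
    (U : Ω → ZMod (T + 1))
    (hU : ∀ u : ZMod (T + 1), ∑ ω, (if U ω = u then p ω else 0) = 1 / (T + 1))
    (hind : ∀ (u : ZMod (T + 1)) (G : (ZMod (T + 1) → Fin K → ℝ) → ℝ),
      ∑ ω, (if U ω = u then p ω else 0) * G (Z ω)
        = (1 / (T + 1)) * ∑ ω, p ω * G (Z ω)) :
    (∀ (t : ZMod (T + 1)) (k : Fin K), ∑ ω, p ω * Z ω (t - U ω) k = 0) ∧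
    (∀ (k l : Fin K) (t s : ZMod (T + 1)),
      ∑ ω, p ω * (Z ω (t - U ω) k * Z ω (t + s - U ω) l)
        = ∑ ω, p ω * (Z ω 0 k * Z ω s l)) :=
  shifted_process_WSMZ_general T K Ω p Z hmean hstat U hind
end

section
/- Suppose BOLD signals satisfy Y_k(ω;t) = β_k(ω)·(N*h_k)(t − t_{0,k}) + R_k(ω;t) on T = {τΔ}_{τ=0}^T with periodic extension, where E[β_k] = 0, E[R_k(t)] = 0 for all t, and t_{0,k} = τ_{0,k}Δ with τ_{0,k} ∈ ℤ. Let U : Ω → T be uniform and suppose U, (β_1,...,β_K), and the processes (R_1,...,R_K) are mutually independent. Then the autocovariance difference A_{kl}(s) := E[Y_k(t−U) Y_l(t+s−U)] − E[R_k(t−U) R_l(t+s−U)] does not depend on t, and equals E[β_k β_l] · ([N*h_k(−·)] * [N*h_l])(s + t_{0,k} − t_{0,l}). -/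
open scoped BigOperators

/-- Normalized cyclic convolution on the periodic discrete time set `ZMod n`. -/
noncomputable def cconv (n : ℕ) [NeZero n] (f g : ZMod n → ℝ) : ZMod n → ℝ :=
  fun t => (1 / (n : ℝ)) * ∑ τ : ZMod n, f τ * g (t - τ)

/-- For BOLD signals `Y_k(ω;t) = β_k(ω)·(N*h_k)(t - t_{0,k}) + R_k(ω;t)`
with `E β_k = 0`, `E R_k(t) = 0`, `U` uniform and `U, β, R` mutually independent,
the autocovariance difference
`A_{kl}(s) = E[Y_k(t-U) Y_l(t+s-U)] - E[R_k(t-U) R_l(t+s-U)]`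
does not depend on `t` and equals
`E[β_k β_l] · ([N*h_k(-·)] * [N*h_l])(s + t_{0,k} - t_{0,l})`. -/
theorem autocovariance_difference (T K : ℕ) (Ω : Type*) [Fintype Ω] (p : Ω → ℝ)
    (hp0 : ∀ ω, 0 ≤ p ω) (hp1 : ∑ ω, p ω = 1)
    (N : ZMod (T + 1) → ℝ) (h : Fin K → ZMod (T + 1) → ℝ) (τ₀ : Fin K → ℤ)
    (β : Ω → Fin K → ℝ) (R : Ω → Fin K → ZMod (T + 1) → ℝ)
    (U : Ω → ZMod (T + 1))
    (Y : Ω → Fin K → ZMod (T + 1) → ℝ)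
    (hY : ∀ ω (k : Fin K) (t : ZMod (T + 1)),
      Y ω k t = β ω k * cconv (T + 1) N (h k) (t - (τ₀ k : ZMod (T + 1))) + R ω k t)
    (hβmean : ∀ k : Fin K, ∑ ω, p ω * β ω k = 0)
    (hRmean : ∀ (k : Fin K) (t : ZMod (T + 1)), ∑ ω, p ω * R ω k t = 0)
    (hU : ∀ u : ZMod (T + 1), ∑ ω, (if U ω = u then p ω else 0) = 1 / (T + 1))
    (hind : ∀ (u : ZMod (T + 1)) (F : (Fin K → ℝ) → ℝ)
        (G : (Fin K → ZMod (T + 1) → ℝ) → ℝ),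
      ∑ ω, (if U ω = u then p ω else 0) * (F (β ω) * G (R ω))
        = (1 / (T + 1)) * ((∑ ω, p ω * F (β ω)) * (∑ ω, p ω * G (R ω)))) :
    ∀ (k l : Fin K) (t s : ZMod (T + 1)),
      (∑ ω, p ω * (Y ω k (t - U ω) * Y ω l (t + s - U ω)))
        - (∑ ω, p ω * (R ω k (t - U ω) * R ω l (t + s - U ω)))
      = (∑ ω, p ω * (β ω k * β ω l)) *
          cconv (T + 1) (fun τ => cconv (T + 1) N (h k) (-τ)) (cconv (T + 1) N (h l))
            (s + (τ₀ k : ZMod (T + 1)) - (τ₀ l : ZMod (T + 1))) := by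
  intro k l t s
  classical
  set Ck : ZMod (T+1) → ℝ := fun x => cconv (T+1) N (h k) (x - (τ₀ k : ZMod (T+1))) with hCk
  set Cl : ZMod (T+1) → ℝ := fun x => cconv (T+1) N (h l) (x - (τ₀ l : ZMod (T+1))) with hCl
  -- key decomposition over values of U
  have key : ∀ f : Ω → ZMod (T+1) → ℝ,
      ∑ ω, p ω * f ω (U ω)
        = ∑ u : ZMod (T+1), ∑ ω, (if U ω = u then p ω else 0) * f ω u := by
    intro f
    rw [Finset.sum_comm]
    refine Finset.sum_congr rfl fun ω _ => ?_
    simp [ite_mul]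
  -- expand Y
  have hYY : ∀ ω : Ω, p ω * (Y ω k (t - U ω) * Y ω l (t + s - U ω)) =
      p ω * ((β ω k * β ω l) * (Ck (t - U ω) * Cl (t + s - U ω)))
      + p ω * (((β ω k) * R ω l (t + s - U ω)) * Ck (t - U ω))
      + p ω * (((β ω l) * R ω k (t - U ω)) * Cl (t + s - U ω))
      + p ω * (R ω k (t - U ω) * R ω l (t + s - U ω)) := by
    intro ω
    rw [hY ω k (t - U ω), hY ω l (t + s - U ω)]
    simp only [hCk, hCl]
    ring
  have hsplit : (∑ ω, p ω * (Y ω k (t - U ω) * Y ω l (t + s - U ω)))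
      = (∑ ω, p ω * ((β ω k * β ω l) * (Ck (t - U ω) * Cl (t + s - U ω))))
      + (∑ ω, p ω * (((β ω k) * R ω l (t + s - U ω)) * Ck (t - U ω)))
      + (∑ ω, p ω * (((β ω l) * R ω k (t - U ω)) * Cl (t + s - U ω)))
      + (∑ ω, p ω * (R ω k (t - U ω) * R ω l (t + s - U ω))) := by
    rw [Finset.sum_congr rfl fun ω _ => hYY ω]
    rw [Finset.sum_add_distrib, Finset.sum_add_distrib, Finset.sum_add_distrib]
  -- cross term 1 vanishes
  have hcross1 : (∑ ω, p ω * (((β ω k) * R ω l (t + s - U ω)) * Ck (t - U ω))) = 0 := by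
    rw [key (fun ω u => ((β ω k) * R ω l (t + s - u)) * Ck (t - u))]
    refine Finset.sum_eq_zero fun u _ => ?_
    have h0 : (∑ ω, (if U ω = u then p ω else 0) * (β ω k * R ω l (t + s - u))) = 0 := by
      rw [hind u (fun b => b k) (fun r => r l (t + s - u)), hβmean k]
      ring
    calc ∑ ω, (if U ω = u then p ω else 0) * (β ω k * R ω l (t + s - u) * Ck (t - u))
        = (∑ ω, (if U ω = u then p ω else 0) * (β ω k * R ω l (t + s - u))) * Ck (t - u) := by
          rw [Finset.sum_mul]; exact Finset.sum_congr rfl fun ω _ => by ring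
      _ = 0 := by rw [h0, zero_mul]
  -- cross term 2 vanishes
  have hcross2 : (∑ ω, p ω * (((β ω l) * R ω k (t - U ω)) * Cl (t + s - U ω))) = 0 := by
    rw [key (fun ω u => ((β ω l) * R ω k (t - u)) * Cl (t + s - u))]
    refine Finset.sum_eq_zero fun u _ => ?_
    have h0 : (∑ ω, (if U ω = u then p ω else 0) * (β ω l * R ω k (t - u))) = 0 := by
      rw [hind u (fun b => b l) (fun r => r k (t - u)), hβmean l]
      ring
    calc ∑ ω, (if U ω = u then p ω else 0) * (β ω l * R ω k (t - u) * Cl (t + s - u))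
        = (∑ ω, (if U ω = u then p ω else 0) * (β ω l * R ω k (t - u))) * Cl (t + s - u) := by
          rw [Finset.sum_mul]; exact Finset.sum_congr rfl fun ω _ => by ring
      _ = 0 := by rw [h0, zero_mul]
  -- main term
  have hmain : (∑ ω, p ω * ((β ω k * β ω l) * (Ck (t - U ω) * Cl (t + s - U ω))))
      = (∑ ω, p ω * (β ω k * β ω l)) *
          ((1 / ((T : ℝ) + 1)) * ∑ u : ZMod (T+1), Ck (t - u) * Cl (t + s - u)) := by
    rw [key (fun ω u => (β ω k * β ω l) * (Ck (t - u) * Cl (t + s - u)))]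
    have inner : ∀ u : ZMod (T+1),
        (∑ ω, (if U ω = u then p ω else 0) * (β ω k * β ω l * (Ck (t - u) * Cl (t + s - u))))
        = ((1 / ((T : ℝ) + 1)) * (∑ ω, p ω * (β ω k * β ω l))) * (Ck (t - u) * Cl (t + s - u)) := by
      intro u
      have h1 : (∑ ω, (if U ω = u then p ω else 0) * (β ω k * β ω l))
          = (1 / ((T : ℝ) + 1)) * (∑ ω, p ω * (β ω k * β ω l)) := by
        have h2 := hind u (fun b => b k * b l) (fun _ => 1)
        simp only [mul_one] at h2
        rw [h2, hp1, mul_one]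
      calc ∑ ω, (if U ω = u then p ω else 0) * (β ω k * β ω l * (Ck (t - u) * Cl (t + s - u)))
          = (∑ ω, (if U ω = u then p ω else 0) * (β ω k * β ω l)) * (Ck (t - u) * Cl (t + s - u)) := by
            rw [Finset.sum_mul]; exact Finset.sum_congr rfl fun ω _ => by ring
        _ = _ := by rw [h1]
    rw [Finset.sum_congr rfl fun u _ => inner u, ← Finset.mul_sum]
    ring
  -- convolution identity via reindexing
  have hsum : ∑ τ : ZMod (T+1), cconv (T+1) N (h k) (-τ) *
        cconv (T+1) N (h l) (s + (τ₀ k : ZMod (T+1)) - (τ₀ l : ZMod (T+1)) - τ)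
      = ∑ u : ZMod (T+1), Ck (t - u) * Cl (t + s - u) := by
    refine Fintype.sum_equiv (Equiv.addRight (t - (τ₀ k : ZMod (T+1)))) _ _ fun τ => ?_
    simp only [hCk, hCl, Equiv.coe_addRight]
    have a1 : t - (τ + (t - (τ₀ k : ZMod (T+1)))) - (τ₀ k : ZMod (T+1)) = -τ := by ring
    have a2 : t + s - (τ + (t - (τ₀ k : ZMod (T+1)))) - (τ₀ l : ZMod (T+1))
        = s + (τ₀ k : ZMod (T+1)) - (τ₀ l : ZMod (T+1)) - τ := by ring
    rw [a1, a2]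
  have hconv : cconv (T + 1) (fun τ => cconv (T + 1) N (h k) (-τ)) (cconv (T + 1) N (h l))
        (s + (τ₀ k : ZMod (T + 1)) - (τ₀ l : ZMod (T + 1)))
      = (1 / ((T : ℝ) + 1)) * ∑ u : ZMod (T+1), Ck (t - u) * Cl (t + s - u) := by
    have expand : cconv (T + 1) (fun τ => cconv (T + 1) N (h k) (-τ)) (cconv (T + 1) N (h l))
          (s + (τ₀ k : ZMod (T + 1)) - (τ₀ l : ZMod (T + 1)))
        = (1 / (((T + 1 : ℕ)) : ℝ)) * ∑ τ : ZMod (T+1), cconv (T+1) N (h k) (-τ) *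
            cconv (T+1) N (h l) (s + (τ₀ k : ZMod (T+1)) - (τ₀ l : ZMod (T+1)) - τ) := rfl
    rw [expand, hsum]
    push_cast
    ring
  rw [hsplit, hcross1, hcross2, hmain, hconv]
  ring
end

section
/- Under the assumptions of the previous theorem, and assuming additionally that E[β_k²] > 0, E[β_l²] > 0, and ξ is such that N̂(ξ) ≠ 0, ĥ_k(ξ) ≠ 0, ĥ_l(ξ) ≠ 0, the normalized quantity C_{kl}(ξ) := |Â_{kl}(ξ)| / sqrt(|Â_{kk}(ξ) Â_{ll}(ξ)|) equals |corr(β_k, β_l)| = |E[β_k β_l]| / sqrt(E[β_k²] E[β_l²]), independently of ξ, of the latency times t_{0,k}, t_{0,l}, and of the HRFs h_k, h_l. -/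
/-!
Every spectral coefficient `Â_{kl}(ξ)` factors as `E[β_kβ_l]` times the positive number
`|N̂(ξ)|² |ĥ_k(ξ)| |ĥ_l(ξ)|` times a unimodular phase. Taking norms kills the phases, and the
positive factor appears once in `|Â_{kl}|` and squared under the root in `|Â_{kk} Â_{ll}|`,
so it cancels, leaving `|E[β_kβ_l]| / sqrt(E[β_k²] E[β_l²])`.
-/

open scoped ComplexConjugate

open Complex in
theorem norm_crossSpectrum (b : ℝ) (N h h' : ℂ) (θ : ℝ) :
    ‖(b : ℂ) * ((‖N‖ : ℝ) : ℂ) ^ 2 * conj h * h' * exp (I * (θ : ℂ))‖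
      = |b| * (‖N‖ ^ 2 * (‖h‖ * ‖h'‖)) := by
  simp only [norm_mul, norm_pow, norm_real, Real.norm_eq_abs, abs_norm, RCLike.norm_conj,
    norm_exp_I_mul_ofReal, mul_one]
  ring

theorem Real.mul_div_sqrt_mul_sq_cancel (a d : ℝ) {c : ℝ} (hc : 0 < c) :
    a * c / √(d * c ^ 2) = a / √d := by
  rw [Real.sqrt_mul' d (sq_nonneg c), Real.sqrt_sq hc.le, mul_div_mul_right _ _ hc.ne']

/-- with `Â_{kl}(ξ) = E[β_kβ_l]·|N̂(ξ)|²·conj(ĥ_k(ξ))·ĥ_l(ξ)·e^{2πi(t_{0,k}-t_{0,l})ξ}`,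
if `E[β_k²] > 0`, `E[β_l²] > 0`, `N̂(ξ) ≠ 0`, `ĥ_k(ξ) ≠ 0`, `ĥ_l(ξ) ≠ 0`, then
`C_{kl}(ξ) = |Â_{kl}(ξ)| / sqrt(|Â_{kk}(ξ) Â_{ll}(ξ)|) = |E[β_kβ_l]| / sqrt(E[β_k²] E[β_l²])`,
independently of `ξ`, the latencies and the HRFs. -/
theorem substitute_equation (Ebkl Ebk2 Ebl2 : ℝ) (hk2 : 0 < Ebk2) (hl2 : 0 < Ebl2)
    (Nhat hk hl : ℂ) (hN : Nhat ≠ 0) (hhk : hk ≠ 0) (hhl : hl ≠ 0)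
    (t0k t0l ξ : ℝ)
    (Akl Akk All : ℂ)
    (hAkl : Akl = (Ebkl : ℂ) * ((‖Nhat‖ : ℝ) : ℂ) ^ 2 * conj hk * hl *
      Complex.exp (Complex.I * ((2 * Real.pi * (t0k - t0l) * ξ : ℝ) : ℂ)))
    (hAkk : Akk = (Ebk2 : ℂ) * ((‖Nhat‖ : ℝ) : ℂ) ^ 2 * conj hk * hk *
      Complex.exp (Complex.I * ((2 * Real.pi * (t0k - t0k) * ξ : ℝ) : ℂ)))
    (hAll : All = (Ebl2 : ℂ) * ((‖Nhat‖ : ℝ) : ℂ) ^ 2 * conj hl * hl *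
      Complex.exp (Complex.I * ((2 * Real.pi * (t0l - t0l) * ξ : ℝ) : ℂ))) :
    ‖Akl‖ / Real.sqrt (‖Akk * All‖)
      = |Ebkl| / Real.sqrt (Ebk2 * Ebl2) := by
  have hc : 0 < ‖Nhat‖ ^ 2 * (‖hk‖ * ‖hl‖) := by
    have := norm_pos_iff.mpr hN; have := norm_pos_iff.mpr hhk; have := norm_pos_iff.mpr hhl
    positivity
  have hdiag : ‖Akk * All‖ = Ebk2 * Ebl2 * (‖Nhat‖ ^ 2 * (‖hk‖ * ‖hl‖)) ^ 2 := by
    rw [norm_mul, hAkk, hAll, norm_crossSpectrum, norm_crossSpectrum, abs_of_pos hk2,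
      abs_of_pos hl2]
    ring
  rw [hAkl, norm_crossSpectrum, hdiag, Real.mul_div_sqrt_mul_sq_cancel _ _ hc]
end

section
/- Suppose A = (a_{ij}) is a 2×2 real matrix and (s₁(ω;t), s₂(ω;t)) is a stochastic process satisfying both A·(s₁(ω;t), s₂(ω;t))ᵀ = (Y_k(ω;t−U(ω)) − β*C_k, (N*h_k)(t−t_{0,k}−U(ω)) − C_k)ᵀ and the decomposition [[1,1],[1/β*,0]] = A Λ⁻¹ P⁻¹ with Λ nonsingular diagonal, P a permutation matrix, and (J_k(ω;t), R_k(ω;t−U(ω)))ᵀ = P Λ (s₁(ω;t), s₂(ω;t))ᵀ for all t, where β* = β_k(ω) ≠ 0 and J_k(ω;t) = β_k(ω)·{(N*h_k)(t−t_{0,k}−U(ω)) − C_k}. Then there exists i' ∈ {1,2} such that a_{1i'}·s_{i'}(ω;t) = J_k(ω;t) for all t ∈ T. -/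
/-- in the AMUSE decomposition of a single-node BOLD signal
(`(J_k, R_k)ᵀ = PΛ(s₁,s₂)ᵀ` with mixing `A(s₁,s₂)ᵀ = (Y_k(·-U) - β*C_k, (N*h_k)(·-t₀-U) - C_k)ᵀ`
and `[[1,1],[1/β*,0]] = AΛ⁻¹P⁻¹`), there exists `i' ∈ {1,2}` with
`a_{1i'}·s_{i'}(ω;t) = J_k(ω;t)` for all `t`. -/
theorem amuse_recovers_task_term (Tt : Type*) (A : Matrix (Fin 2) (Fin 2) ℝ)
    (s : Fin 2 → Tt → ℝ) (βs : ℝ) (hβ : βs ≠ 0)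
    (Ysh Nconv Rsh Jk : Tt → ℝ) (Ck : ℝ)
    (hJ : ∀ t, Jk t = βs * (Nconv t - Ck))
    (hYmodel : ∀ t, Ysh t = βs * Nconv t + Rsh t)
    (d : Fin 2 → ℝ) (hd : ∀ i, d i ≠ 0)
    (P : Matrix (Fin 2) (Fin 2) ℝ) (σ : Equiv.Perm (Fin 2))
    (hP : ∀ i j, P i j = if σ i = j then (1 : ℝ) else 0)
    (hmix : ∀ t, A.mulVec (fun i => s i t) = ![Ysh t - βs * Ck, Nconv t - Ck])
    (hdecomp : !![1, 1; 1 / βs, 0] = A * (Matrix.diagonal d)⁻¹ * P⁻¹)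
    (hsource : ∀ t, (P * Matrix.diagonal d).mulVec (fun i => s i t) = ![Jk t, Rsh t]) :
    ∃ i' : Fin 2, ∀ t, A 0 i' * s i' t = Jk t := by
  refine ⟨σ 0, fun t => ?_⟩
  have hσne : σ 1 ≠ σ 0 := fun h => absurd (σ.injective h) (by decide)
  have hcase : σ 0 = 0 ∨ σ 0 = 1 := by omega
  have hΛ : (Matrix.diagonal d)⁻¹ * Matrix.diagonal d = 1 := by
    apply Matrix.nonsing_inv_mul
    simp [Matrix.det_diagonal, Fin.prod_univ_two, hd 0, hd 1]
  have hPu : P⁻¹ * P = 1 := by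
    apply Matrix.nonsing_inv_mul
    have hdet : P.det = P 0 0 * P 1 1 - P 0 1 * P 1 0 := Matrix.det_fin_two P
    rcases hcase with h | h <;>
      · have h1 : σ 1 = 1 ∨ σ 1 = 0 := by omega
        rcases h1 with h1 | h1
        · simp_all [hP, hdet]
        · simp_all [hP, hdet]
  have hA : !![1, 1; 1 / βs, 0] * (P * Matrix.diagonal d) = A := by
    rw [hdecomp, Matrix.mul_assoc, Matrix.mul_assoc, ← Matrix.mul_assoc P⁻¹, hPu,
      Matrix.one_mul, hΛ, Matrix.mul_one]
  have hA0 : A 0 (σ 0) = d (σ 0) := by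
    rw [← hA]
    rcases hcase with h | h <;>
      simp [Matrix.mul_apply, Fin.sum_univ_two, hP, h, hσne, Matrix.diagonal,
        Matrix.of_apply, hσne.symm] <;> simp_all [hP]
  have hs := congrFun (hsource t) 0
  rw [Matrix.mulVec, dotProduct] at hs  -- compute row 0
  rcases hcase with h | h <;>
    · rw [hA0]
      simpa [Fin.sum_univ_two, Matrix.mul_apply, hP, h, Matrix.diagonal, hσne,
        h ▸ hσne] using hs
end
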